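/- Under Assumption 1, the value function V satisfies the dynamic programming principle: for every x ∈ ℝⁿ and every integer k ≥ 1, V(x) = sup_π max{ Σ_{i=1}^{k} ln(g(φ_x^π(i−1)) + 1) + V(φ_x^π(k)), max_{0 ≤ i ≤ k−1} [ Σ_{j₁=1}^{i} ln(g(φ_x^π(j₁−1)) + 1) − min_{j=1,…,n_X} ln(l(1 − h_j^X(φ_x^π(i)))) ] }, where all expressions take values in [0, ∞] with the convention ln 0 = −∞. -/

import Mathlib

/-!
Splitting a horizon `N ≥ k` at time `k` writes the payoff of a policy as the cost accumulated
up to `k` plus the payoff of the shifted policy from `traj f x π k`, which is at most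
`V (traj f x π k)`; horizons `N < k` give the second branch of the maximum. Conversely,
concatenating a policy on `[0, k)` with any policy started at `traj f x π k` shows that every
term of `c + V (traj f x π k)` is a payoff from `x`; this needs that adding a finite constant
commutes with suprema in `EReal`.
-/

open Metric Set Filter MeasureTheory

noncomputable section

abbrev St (n : ℕ) := EuclideanSpace ℝ (Fin n)

/-- Trajectory of the perturbed discrete-time system. -/
def traj {n m : ℕ} (f : St n → St m → St n) (x₀ : St n) (π : ℕ → St m) : ℕ → St n
  | 0 => x₀
  | k + 1 => f (traj f x₀ π k) (π k)

/-- A perturbation input policy takes values in `D`. -/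
def IsPolicy {m : ℕ} (D : Set (St m)) (π : ℕ → St m) : Prop := ∀ k, π k ∈ D

/-- Maximal robust region of attraction. -/
def RoA {n m : ℕ} (f : St n → St m → St n) (D : Set (St m)) (X : Set (St n)) : Set (St n) :=
  {x₀ | ∀ π, IsPolicy D π →
    (∀ k, traj f x₀ π k ∈ X) ∧ Tendsto (fun k => traj f x₀ π k) atTop (nhds 0)}

/-- `f` is a polynomial map in `(x, d)`. -/
def IsPolyMap2 {n m : ℕ} (f : St n → St m → St n) : Prop :=
  ∃ p : Fin n → MvPolynomial (Fin n ⊕ Fin m) ℝ,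
    ∀ x d i, f x d i = MvPolynomial.eval (Sum.elim x d) (p i)

/-- A real-valued polynomial function on the state space. -/
def IsPolyFun {n : ℕ} (g : St n → ℝ) : Prop :=
  ∃ p : MvPolynomial (Fin n) ℝ, ∀ x, g x = MvPolynomial.eval x p

/-- Assumption 1: uniform local exponential stability. -/
def Assumption1 {n m : ℕ} (f : St n → St m → St n) (D : Set (St m)) (X : Set (St n)) : Prop :=
  ∃ M r lam : ℝ, 0 < M ∧ 0 < r ∧ 0 < lam ∧ lam < 1 ∧ closedBall (0 : St n) r ⊆ X ∧
    ∀ x₀ ∈ closedBall (0 : St n) r, ∀ π, IsPolicy D π →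
      ∀ k, ‖traj f x₀ π k‖ ≤ lam ^ k * M * ‖x₀‖

/-- Maximal robust region of uniform attraction (with ball radius `ε`). -/
def R0 {n m : ℕ} (f : St n → St m → St n) (D : Set (St m)) (X : Set (St n)) (ε : ℝ) :
    Set (St n) :=
  {x₀ | (∃ δ > 0, ∀ π, IsPolicy D π → ∀ k, δ < infDist (traj f x₀ π k) Xᶜ) ∧
        (∃ K : ℕ, ∀ π, IsPolicy D π →
            ∃ k, 0 < k ∧ k ≤ K ∧ traj f x₀ π k ∈ closedBall (0 : St n) ε)}

/-- Extended-real logarithm with the convention `ln 0 = -∞`. -/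
def elog (t : ℝ) : EReal := if t = 0 then ⊥ else (Real.log t : EReal)

/-- The value function `V`. -/
def Vval {n m nX : ℕ} (f : St n → St m → St n) (D : Set (St m))
    (hX : Fin nX → St n → ℝ) (g : St n → ℝ) (x : St n) : EReal :=
  ⨆ π ∈ {π : ℕ → St m | IsPolicy D π}, ⨆ k : ℕ,
    ((∑ i ∈ Finset.range k, Real.log (g (traj f x π i) + 1) : ℝ) : EReal)
      - ⨅ j : Fin nX, elog (max (1 - hX j (traj f x π k)) 0)

/-- The Kruzhkov transformed value function `v = 1 - e^{-V}` (with `e^{-∞} = 0`). -/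
def vval {n m nX : ℕ} (f : St n → St m → St n) (D : Set (St m))
    (hX : Fin nX → St n → ℝ) (g : St n → ℝ) (x : St n) : ℝ :=
  if Vval f D hX g x = ⊤ then 1 else 1 - Real.exp (-(Vval f D hX g x).toReal)

/-- `w` is a (bounded continuous) solution of the Bellman equation. -/
def IsBellmanSolution {n m nX : ℕ} (f : St n → St m → St n) (D : Set (St m))
    (hX : Fin nX → St n → ℝ) (g : St n → ℝ) (w : St n → ℝ) : Prop :=
  (∀ x, min (sInf {y : ℝ | ∃ d ∈ D, y = w x - w (f x d) - g x * (1 - w x)})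
            (w x - 1 + ⨅ j : Fin nX, max (1 - hX j x) 0) = 0) ∧ w 0 = 0


open Finset

theorem EReal.coe_add_iSup {ι : Sort*} (c : ℝ) (f : ι → EReal) :
    (c : EReal) + ⨆ i, f i = ⨆ i, (c : EReal) + f i :=
  Monotone.map_iSup_of_continuousAt (f := fun x : EReal => (c : EReal) + x)
    ((EReal.continuousAt_add (Or.inl (EReal.coe_ne_top c)) (Or.inl (EReal.coe_ne_bot c))).comp
      (Continuous.prodMk_right _).continuousAt)
    (fun _ _ h => add_le_add le_rfl h) (EReal.add_bot _)

section Trajectory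

variable {n m : ℕ} (f : St n → St m → St n)

theorem traj_add (x : St n) (π : ℕ → St m) (k j : ℕ) :
    traj f x π (k + j) = traj f (traj f x π k) (fun i => π (k + i)) j := by
  induction j with
  | zero => rfl
  | succ j ih => exact congrArg (f · (π (k + j))) ih

theorem traj_congr (x : St n) {π π' : ℕ → St m} {k : ℕ} (h : ∀ i < k, π i = π' i) :
    traj f x π k = traj f x π' k := by
  induction k with
  | zero => rfl
  | succ k ih =>
    change f (traj f x π k) (π k) = f (traj f x π' k) (π' k)
    rw [ih fun i hi => h i (Nat.lt_succ_of_lt hi), h k (Nat.lt_succ_self k)]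

def concatPolicy (k : ℕ) (π π' : ℕ → St m) (i : ℕ) : St m :=
  if i < k then π i else π' (i - k)

variable {f}

theorem concatPolicy_of_lt {k i : ℕ} (π π' : ℕ → St m) (hi : i < k) :
    concatPolicy k π π' i = π i :=
  if_pos hi

theorem concatPolicy_shift (k : ℕ) (π π' : ℕ → St m) :
    (fun i => concatPolicy k π π' (k + i)) = π' := by
  funext i
  simp [concatPolicy]

theorem IsPolicy.concatPolicy {D : Set (St m)} {π π' : ℕ → St m} (hπ : IsPolicy D π)
    (hπ' : IsPolicy D π') (k : ℕ) : IsPolicy D (concatPolicy k π π') := fun i => by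
  unfold _root_.concatPolicy
  split_ifs
  exacts [hπ i, hπ' (i - k)]

theorem IsPolicy.shift {D : Set (St m)} {π : ℕ → St m} (hπ : IsPolicy D π) (k : ℕ) :
    IsPolicy D fun i => π (k + i) :=
  fun i => hπ (k + i)

end Trajectory

section DynamicProgramming

variable {n m nX : ℕ} (f : St n → St m → St n) (D : Set (St m))
  (hX : Fin nX → St n → ℝ) (g : St n → ℝ)

def runningCost (x : St n) (π : ℕ → St m) (k : ℕ) : ℝ :=
  ∑ i ∈ range k, Real.log (g (traj f x π i) + 1)

/-- The paper's `min_j ln (l (1 - h_j^X y))`; it is `⊥` outside the constraint set. -/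
def logMargin (y : St n) : EReal :=
  ⨅ j, elog (max (1 - hX j y) 0)

def payoff (x : St n) (π : ℕ → St m) (k : ℕ) : EReal :=
  (runningCost f g x π k : EReal) - logMargin hX (traj f x π k)

theorem Vval_eq_iSup_payoff (x : St n) :
    Vval f D hX g x = ⨆ π ∈ {π : ℕ → St m | IsPolicy D π}, ⨆ k, payoff f hX g x π k :=
  rfl

variable {f D hX g}

theorem runningCost_add (x : St n) (π : ℕ → St m) (k j : ℕ) :
    runningCost f g x π (k + j) =
      runningCost f g x π k + runningCost f g (traj f x π k) (fun i => π (k + i)) j := by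
  simp only [runningCost, sum_range_add, traj_add]

theorem runningCost_congr (x : St n) {π π' : ℕ → St m} {k : ℕ} (h : ∀ i < k, π i = π' i) :
    runningCost f g x π k = runningCost f g x π' k :=
  sum_congr rfl fun i hi => by
    rw [traj_congr f x fun l hl => h l (hl.trans (mem_range.mp hi))]

theorem payoff_add (x : St n) (π : ℕ → St m) (k j : ℕ) :
    payoff f hX g x π (k + j) =
      (runningCost f g x π k : EReal) + payoff f hX g (traj f x π k) (fun i => π (k + i)) j := by
  rw [payoff, payoff, runningCost_add, traj_add, EReal.coe_add, sub_eq_add_neg, sub_eq_add_neg,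
    add_assoc]

theorem payoff_concatPolicy (x : St n) (π π' : ℕ → St m) (k j : ℕ) :
    payoff f hX g x (concatPolicy k π π') (k + j) =
      (runningCost f g x π k : EReal) + payoff f hX g (traj f x π k) π' j := by
  have hagree : ∀ i < k, concatPolicy k π π' i = π i := fun i hi => concatPolicy_of_lt π π' hi
  rw [payoff_add, concatPolicy_shift, runningCost_congr x hagree, traj_congr f x hagree]

theorem payoff_le_Vval {x : St n} {π : ℕ → St m} (hπ : IsPolicy D π) (k : ℕ) :
    payoff f hX g x π k ≤ Vval f D hX g x :=
  le_iSup₂_of_le π hπ (le_iSup (payoff f hX g x π) k)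

theorem runningCost_add_Vval_le {x : St n} {π : ℕ → St m} (hπ : IsPolicy D π) (k : ℕ) :
    (runningCost f g x π k : EReal) + Vval f D hX g (traj f x π k) ≤ Vval f D hX g x := by
  simp only [Vval_eq_iSup_payoff, EReal.coe_add_iSup]
  refine iSup₂_le fun π' hπ' => iSup_le fun j => ?_
  rw [← payoff_concatPolicy]
  exact payoff_le_Vval (hπ.concatPolicy hπ' k) (k + j)

theorem Vval_eq_iSup_max (x : St n) (k : ℕ) :
    Vval f D hX g x = ⨆ π ∈ {π : ℕ → St m | IsPolicy D π},
      max ((runningCost f g x π k : EReal) + Vval f D hX g (traj f x π k))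
        (⨆ i ∈ range k, payoff f hX g x π i) := by
  refine le_antisymm ((Vval_eq_iSup_payoff f D hX g x).trans_le
    (iSup₂_le fun π hπ => iSup_le fun N => ?_))
    (iSup₂_le fun π hπ => max_le (runningCost_add_Vval_le hπ k)
      (iSup₂_le fun i _ => payoff_le_Vval hπ i))
  refine le_iSup₂_of_le π hπ ?_
  rcases lt_or_ge N k with hN | hN
  · exact le_max_of_le_right (le_iSup₂_of_le N (mem_range.mpr hN) le_rfl)
  · obtain ⟨j, rfl⟩ := Nat.exists_eq_add_of_le hN
    rw [payoff_add]
    exact le_max_of_le_left (add_le_add le_rfl (payoff_le_Vval (hπ.shift k) j))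

end DynamicProgramming

theorem stmt15_general
    {n m nX : ℕ}
    (f : St n → St m → St n)
    (D : Set (St m))
    (hX : Fin nX → St n → ℝ)
    (g : St n → ℝ)
    :
    ∀ x : St n, ∀ k : ℕ, 1 ≤ k →
      Vval f D hX g x =
        ⨆ π ∈ {π : ℕ → St m | IsPolicy D π},
          max (((∑ i ∈ Finset.range k, Real.log (g (traj f x π i) + 1) : ℝ) : EReal)
                + Vval f D hX g (traj f x π k))
              (⨆ i ∈ Finset.range k,
                ((∑ j1 ∈ Finset.range i, Real.log (g (traj f x π j1) + 1) : ℝ) : EReal)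
                  - ⨅ j : Fin nX, elog (max (1 - hX j (traj f x π i)) 0)) :=
  fun x k _ => Vval_eq_iSup_max x k

theorem stmt15
    {n m nX : ℕ} (hnX : 0 < nX)
    (f : St n → St m → St n) (hfpoly : IsPolyMap2 f)
    (D : Set (St m)) (hD : IsCompact D)
    (hf0 : ∀ d ∈ D, f 0 d = 0)
    (hX : Fin nX → St n → ℝ) (hXpoly : ∀ j, IsPolyFun (hX j))
    (hX0 : ∀ j, hX j 0 = 0) (hXpos : ∀ j, ∀ x : St n, x ≠ 0 → 0 < hX j x)
    (X : Set (St n)) (hXdef : X = {x | ∀ j, hX j x < 1})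
    (hXbdd : Bornology.IsBounded X) (hXopen : IsOpen X)
    (hA1 : Assumption1 f D X)
    (g : St n → ℝ) (hgpoly : IsPolyFun g) (hgnn : ∀ x, 0 ≤ g x)
    (hgzero : ∀ x : St n, g x = 0 ↔ x = 0)
    :
    ∀ x : St n, ∀ k : ℕ, 1 ≤ k →
      Vval f D hX g x =
        ⨆ π ∈ {π : ℕ → St m | IsPolicy D π},
          max (((∑ i ∈ Finset.range k, Real.log (g (traj f x π i) + 1) : ℝ) : EReal)
                + Vval f D hX g (traj f x π k))
              (⨆ i ∈ Finset.range k,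
                ((∑ j1 ∈ Finset.range i, Real.log (g (traj f x π j1) + 1) : ℝ) : EReal)
                  - ⨅ j : Fin nX, elog (max (1 - hX j (traj f x π i)) 0)) :=
  stmt15_general f D hX g
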